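/- Fix a real number a with 1/2 < a < 1. For each fixed real number L > 1 there exists a constant c > 0 (depending only on L and a) such that for every real t ≥ 0, every s ∈ [0,t] and every integer j ≥ 0, one has Σ_{k ∈ D_j^3(t)} √(log(3 + j + |k|)) / (3 + |2^j s − k|)^L ≤ c (1 + j) 2^{−j(L−1)(1−a)} √(log(3 + t)). -/

import Mathlib

/-!
For `k ∈ D_j^3(t)` the point `s` lies outside `B_{j,k}`, so `u = |2^j s - k| > c := 2^{j(1-a)}`.
Since `|k| ≤ 2^j s + u`, the numerator splits as
`log (3 + j + |k|) ≤ log (3 + j + 2^j s + c) + log ((1 + u) / c)`: the first term is at most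
`2 (1 + j) log (3 + t)`, the second at most `((1 + u) / c)^ε / ε` with `ε = (L - 1) / 2`.
Comparing with `∫ y^{-p}`, the sum of `(1 + |x - k|)^{-p}` over integers `k` at distance `≥ c`
from `x` is at most `2 c^{1-p} / (p - 1)`; with `p = L` and `p = L - ε` both parts are
`O((1 + j) c^{1-L} √(log (3 + t)))`, and `c^{1-L} = 2^{-j(L-1)(1-a)}`.
-/

/-- The interval `B_{j,k} = [k 2^{-j} - 2^{-ja}, k 2^{-j} + 2^{-ja}]`. -/
noncomputable def intervalB (a : ℝ) (j : ℕ) (k : ℤ) : Set ℝ :=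
  Set.Icc ((k : ℝ) * (2 : ℝ) ^ (-(j : ℤ)) - (2 : ℝ) ^ (-(j : ℝ) * a))
    ((k : ℝ) * (2 : ℝ) ^ (-(j : ℤ)) + (2 : ℝ) ^ (-(j : ℝ) * a))

/-- The set `D_j^3(t)` of indices `k` whose interval `B_{j,k}` does not meet `[0,t]`. -/
noncomputable def setD3 (a : ℝ) (j : ℕ) (t : ℝ) : Set ℤ :=
  {k : ℤ | intervalB a j k ∩ Set.Icc 0 t = ∅}

open Real Finset

lemma sum_range_rpow_neg_le {p b : ℝ} (hp : 1 < p) (hb : 0 < b) (N : ℕ) :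
    ∑ n ∈ range N, (b + (n + 1 : ℕ)) ^ (-p) ≤ b ^ (1 - p) / (p - 1) := by
  have hanti : AntitoneOn (fun y : ℝ => y ^ (-p)) (Set.Icc b (b + N)) :=
    (antitoneOn_rpow_Ioi_of_exponent_nonpos (by linarith)).mono
      fun y hy => lt_of_lt_of_le hb hy.1
  have hzero : (0 : ℝ) ∉ Set.uIcc b (b + N) := by
    rw [Set.uIcc_of_le (by linarith [N.cast_nonneg (α := ℝ)])]
    exact fun h => hb.not_ge h.1
  calc ∑ n ∈ range N, (b + (n + 1 : ℕ)) ^ (-p)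
      ≤ ∫ y in b..b + N, y ^ (-p) := hanti.sum_le_integral
    _ = (b ^ (1 - p) - (b + N) ^ (1 - p)) / (p - 1) := by
      rw [integral_rpow (Or.inr ⟨by linarith, hzero⟩), neg_add_eq_sub, ← neg_sub p 1, div_neg,
        ← neg_div, neg_sub]
    _ ≤ b ^ (1 - p) / (p - 1) := by
      gcongr
      exact sub_le_self _ (by positivity)

lemma sum_rpow_neg_le_of_add_le {p c x : ℝ} (hp : 1 < p) (hc : 0 < c) (F : Finset ℤ)
    (hF : ∀ k ∈ F, x + c ≤ k) :
    ∑ k ∈ F, (1 + (k - x)) ^ (-p) ≤ c ^ (1 - p) / (p - 1) := by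
  set m := ⌈x + c⌉
  have hm : ∀ k ∈ F, m ≤ k := fun k hk => Int.ceil_le.2 (hF k hk)
  have hinj : Set.InjOn (fun k => (k - m).toNat) F := fun k hk l hl h => by
    have := hm k hk; have := hm l hl; simp only at h; omega
  calc ∑ k ∈ F, (1 + (k - x)) ^ (-p)
      ≤ ∑ k ∈ F, (c + ((k - m).toNat + 1 : ℕ)) ^ (-p) := by
        refine sum_le_sum fun k hk => rpow_le_rpow_of_nonpos (by positivity) ?_ (by linarith)
        have hmk : ((k - m).toNat : ℝ) = k - m := by
          exact_mod_cast Int.toNat_of_nonneg (sub_nonneg.2 (hm k hk))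
        push_cast
        linarith [Int.le_ceil (x + c)]
    _ = ∑ n ∈ F.image (fun k => (k - m).toNat), (c + (n + 1 : ℕ)) ^ (-p) :=
        (sum_image (f := fun n : ℕ => (c + (n + 1 : ℕ)) ^ (-p)) hinj).symm
    _ ≤ ∑ n ∈ range ((F.image fun k => (k - m).toNat).sup id + 1),
          (c + (n + 1 : ℕ)) ^ (-p) :=
        sum_le_sum_of_subset_of_nonneg
          (fun n hn => mem_range.2 (Nat.lt_succ_of_le (le_sup (f := id) hn)))
          fun _ _ _ => by positivity
    _ ≤ c ^ (1 - p) / (p - 1) := sum_range_rpow_neg_le hp hc _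

lemma sum_rpow_neg_le_of_le_abs_sub {p c x : ℝ} (hp : 1 < p) (hc : 0 < c) (F : Finset ℤ)
    (hF : ∀ k ∈ F, c ≤ |x - k|) :
    ∑ k ∈ F, (1 + |x - k|) ^ (-p) ≤ 2 * (c ^ (1 - p) / (p - 1)) := by
  rw [← sum_filter_add_sum_filter_not F (fun k : ℤ => x ≤ k), two_mul]
  apply add_le_add
  · have habs : ∀ k ∈ F.filter (fun k : ℤ => x ≤ k), |x - k| = k - x := fun k hk => by
      rw [abs_sub_comm, abs_of_nonneg (sub_nonneg.2 (mem_filter.1 hk).2)]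
    rw [sum_congr rfl fun k hk => by rw [habs k hk]]
    refine sum_rpow_neg_le_of_add_le hp hc _ fun k hk => ?_
    have := hF k (mem_filter.1 hk).1
    linarith [habs k hk]
  · have habs : ∀ k ∈ F.filter (fun k : ℤ => ¬ x ≤ k), |x - k| = (-k : ℤ) - -x :=
      fun k hk => by
      rw [abs_of_pos (sub_pos.2 (not_le.1 (mem_filter.1 hk).2))]
      push_cast; ring
    rw [sum_congr rfl fun k hk => by rw [habs k hk]]
    refine (sum_map _ (Equiv.neg ℤ).toEmbedding
      fun k : ℤ => (1 + ((k : ℝ) - -x)) ^ (-p)).symm.trans_le ?_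
    refine sum_rpow_neg_le_of_add_le hp hc _ fun k hk => ?_
    obtain ⟨l, hl, rfl⟩ := mem_map.1 hk
    have := hF l (mem_filter.1 hl).1
    show -x + c ≤ ((-l : ℤ) : ℝ)
    linarith [habs l hl]

lemma sqrt_add_le_sqrt_add_sqrt {x y : ℝ} (hx : 0 ≤ x) (hy : 0 ≤ y) : √(x + y) ≤ √x + √y := by
  rw [sqrt_le_left (by positivity)]
  nlinarith [sq_sqrt hx, sq_sqrt hy, sqrt_nonneg x, sqrt_nonneg y]

lemma one_le_log_three_add {t : ℝ} (ht : 0 ≤ t) : 1 ≤ log (3 + t) := by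
  rw [le_log_iff_exp_le (by positivity)]
  linarith [exp_one_lt_d9]

lemma sqrt_log_add_le {A c u ε : ℝ} (hA : 1 ≤ A) (hc : 0 < c) (hcu : c ≤ u) (hε : 0 < ε) :
    √(log (A + u)) ≤ √(log (A + c)) + 1 + ((1 + u) / c) ^ ε / ε := by
  have hr : 1 ≤ (1 + u) / c := by rw [le_div_iff₀ hc]; linarith
  have hsplit : A + u ≤ (A + c) * ((1 + u) / c) := by
    rw [← mul_div_assoc, le_div_iff₀ hc]; nlinarith
  have hlog : log (A + u) ≤ log (A + c) + log ((1 + u) / c) := by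
    rw [← log_mul (by positivity) (by positivity)]
    exact log_le_log (by linarith) hsplit
  have hlog_r := log_nonneg hr
  calc √(log (A + u)) ≤ √(log (A + c) + log ((1 + u) / c)) := sqrt_le_sqrt hlog
    _ ≤ √(log (A + c)) + √(log ((1 + u) / c)) :=
      sqrt_add_le_sqrt_add_sqrt (log_nonneg (by linarith)) hlog_r
    _ ≤ √(log (A + c)) + (1 + ((1 + u) / c) ^ ε / ε) := by
      gcongr
      calc √(log ((1 + u) / c)) ≤ 1 + log ((1 + u) / c) :=
            (sqrt_le_left (by linarith)).2 (by nlinarith)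
        _ ≤ 1 + ((1 + u) / c) ^ ε / ε := by gcongr; exact log_le_rpow_div (by positivity) hε
    _ = _ := by ring

lemma log_three_add_le {j : ℕ} {t x c : ℝ} (ht : 0 ≤ t) (hx0 : 0 ≤ x) (hxt : x ≤ 2 ^ j * t)
    (hc0 : 0 ≤ c) (hc : c ≤ 2 ^ j) :
    log (3 + j + x + c) ≤ 2 * (1 + j) * log (3 + t) := by
  have h2j : (1 : ℝ) ≤ 2 ^ j := one_le_pow₀ one_le_two
  have hj : (0 : ℝ) ≤ j := j.cast_nonneg
  have hlog := one_le_log_three_add ht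
  calc log (3 + j + x + c) ≤ log (2 ^ j * (2 + j) * (3 + t)) :=
        log_le_log (by positivity)
          (by nlinarith [mul_nonneg hj (mul_nonneg (by linarith : (0 : ℝ) ≤ 2 ^ j - 1) ht)])
    _ = j * log 2 + log (2 + j) + log (3 + t) := by
        rw [log_mul (by positivity) (by positivity), log_mul (by positivity) (by positivity),
          log_pow]
    _ ≤ j * log (3 + t) + (1 + j) * log (3 + t) + log (3 + t) := by
        gcongr
        · linarith
        · nlinarith [log_le_sub_one_of_pos (by positivity : (0 : ℝ) < 2 + j)]
    _ = 2 * (1 + j) * log (3 + t) := by ring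

lemma sqrt_log_le_of_le_abs_sub {j : ℕ} {t x c ε : ℝ} {k : ℤ} (ht : 0 ≤ t) (hx0 : 0 ≤ x)
    (hxt : x ≤ 2 ^ j * t) (hc : 0 < c) (hcj : c ≤ 2 ^ j) (hck : c ≤ |x - k|) (hε : 0 < ε) :
    √(log (3 + j + |(k : ℝ)|))
      ≤ 3 * (1 + j) * √(log (3 + t)) + ((1 + |x - k|) / c) ^ ε / ε := by
  have hj : (0 : ℝ) ≤ j := j.cast_nonneg
  have hk : |(k : ℝ)| ≤ x + |x - k| := by
    have := abs_sub_abs_le_abs_sub (k : ℝ) x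
    rw [abs_of_nonneg hx0, abs_sub_comm] at this
    linarith
  have hS : 1 ≤ √(log (3 + t)) := one_le_sqrt.2 (one_le_log_three_add ht)
  have hlog := one_le_log_three_add ht
  have hsqrt : √(log (3 + j + x + c)) ≤ 2 * (1 + j) * √(log (3 + t)) := by
    rw [sqrt_le_left (by positivity), mul_pow, sq_sqrt (by linarith)]
    nlinarith [log_three_add_le ht hx0 hxt hc.le hcj,
      mul_nonneg hj (by linarith : (0 : ℝ) ≤ log (3 + t))]
  calc √(log (3 + j + |(k : ℝ)|)) ≤ √(log ((3 + j + x) + |x - k|)) :=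
        sqrt_le_sqrt (log_le_log (by positivity) (by linarith))
    _ ≤ √(log (3 + j + x + c)) + 1 + ((1 + |x - k|) / c) ^ ε / ε :=
        sqrt_log_add_le (by linarith) hc hck hε
    _ ≤ 3 * (1 + j) * √(log (3 + t)) + ((1 + |x - k|) / c) ^ ε / ε := by
        nlinarith

lemma div_three_add_rpow_le {N α u c ε L : ℝ} (hN0 : 0 ≤ N)
    (hN : N ≤ α + ((1 + u) / c) ^ ε / ε) (hu : 0 ≤ u) (hc : 0 < c) (hL : 0 ≤ L) :
    N / (3 + u) ^ L ≤ α * (1 + u) ^ (-L) + c ^ (-ε) / ε * (1 + u) ^ (-(L - ε)) := by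
  calc N / (3 + u) ^ L ≤ N / (1 + u) ^ L := by gcongr; linarith
    _ ≤ (α + ((1 + u) / c) ^ ε / ε) * (1 + u) ^ (-L) := by
        rw [rpow_neg (by positivity), ← div_eq_mul_inv]; gcongr
    _ = α * (1 + u) ^ (-L) + c ^ (-ε) / ε * (1 + u) ^ (-(L - ε)) := by
        rw [show -(L - ε) = ε + -L by ring, rpow_add (by positivity),
          div_rpow (by positivity) hc.le, rpow_neg hc.le]
        ring

lemma sum_sqrt_log_div_rpow_le {j : ℕ} {t x c L : ℝ} (hL : 1 < L) (ht : 0 ≤ t) (hx0 : 0 ≤ x)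
    (hxt : x ≤ 2 ^ j * t) (hc : 0 < c) (hcj : c ≤ 2 ^ j) (F : Finset ℤ)
    (hF : ∀ k ∈ F, c ≤ |x - k|) :
    ∑ k ∈ F, √(log (3 + j + |(k : ℝ)|)) / (3 + |x - k|) ^ L
      ≤ (6 / (L - 1) + 8 / (L - 1) ^ 2) * (1 + j) * c ^ (1 - L) * √(log (3 + t)) := by
  set ε := (L - 1) / 2 with hε_def
  have hε : 0 < ε := by positivity
  have hLε : L - ε - 1 = ε := by rw [hε_def]; ring
  set M := (1 + j) * √(log (3 + t))
  have hM : 1 ≤ M := one_le_mul_of_one_le_of_one_le (by simp)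
    (one_le_sqrt.2 (one_le_log_three_add ht))
  have hterm : ∀ k ∈ F, √(log (3 + j + |(k : ℝ)|)) / (3 + |x - k|) ^ L
      ≤ 3 * M * (1 + |x - k|) ^ (-L) + c ^ (-ε) / ε * (1 + |x - k|) ^ (-(L - ε)) :=
    fun k hk => div_three_add_rpow_le (sqrt_nonneg _)
      ((sqrt_log_le_of_le_abs_sub ht hx0 hxt hc hcj (hF k hk) hε).trans_eq (by ring))
      (abs_nonneg _) hc (by linarith)
  have hpow : c ^ (-ε) * c ^ (1 - (L - ε)) = c ^ (1 - L) := by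
    rw [← rpow_add hc]; ring_nf
  calc ∑ k ∈ F, √(log (3 + j + |(k : ℝ)|)) / (3 + |x - k|) ^ L
      ≤ ∑ k ∈ F,
          (3 * M * (1 + |x - k|) ^ (-L) + c ^ (-ε) / ε * (1 + |x - k|) ^ (-(L - ε))) :=
        sum_le_sum hterm
    _ = 3 * M * ∑ k ∈ F, (1 + |x - k|) ^ (-L)
          + c ^ (-ε) / ε * ∑ k ∈ F, (1 + |x - k|) ^ (-(L - ε)) := by
        rw [sum_add_distrib, mul_sum, mul_sum]
    _ ≤ 3 * M * (2 * (c ^ (1 - L) / (L - 1)))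
          + c ^ (-ε) / ε * (2 * (c ^ (1 - (L - ε)) / (L - ε - 1))) := by
        gcongr <;> exact sum_rpow_neg_le_of_le_abs_sub (by linarith) hc F hF
    _ = (6 / (L - 1) * M + 8 / (L - 1) ^ 2) * c ^ (1 - L) := by
        rw [← hpow, hLε, hε_def]
        field_simp
        ring
    _ ≤ (6 / (L - 1) + 8 / (L - 1) ^ 2) * (1 + j) * c ^ (1 - L) * √(log (3 + t)) := by
        have : 8 / (L - 1) ^ 2 ≤ 8 / (L - 1) ^ 2 * M :=
          le_mul_of_one_le_right (by positivity) hM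
        rw [show (6 / (L - 1) + 8 / (L - 1) ^ 2) * (1 + j) * c ^ (1 - L) * √(log (3 + t))
          = (6 / (L - 1) * M + 8 / (L - 1) ^ 2 * M) * c ^ (1 - L) by ring]
        gcongr

lemma lt_abs_sub_of_mem_setD3 {a t s : ℝ} {j : ℕ} {k : ℤ} (hk : k ∈ setD3 a j t)
    (hs : s ∈ Set.Icc 0 t) : (2 : ℝ) ^ ((j : ℝ) * (1 - a)) < |(2 : ℝ) ^ (j : ℤ) * s - k| := by
  have hsB : s ∉ intervalB a j k :=
    fun hsB => Set.eq_empty_iff_forall_notMem.1 hk s ⟨hsB, hs⟩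
  rw [intervalB, ← Real.closedBall_eq_Icc, Metric.mem_closedBall, Real.dist_eq, not_le] at hsB
  have h2j : (0 : ℝ) < 2 ^ (j : ℤ) := by positivity
  calc (2 : ℝ) ^ ((j : ℝ) * (1 - a)) = 2 ^ (j : ℤ) * 2 ^ (-(j : ℝ) * a) := by
        rw [← rpow_intCast, ← rpow_add two_pos]; push_cast; ring_nf
    _ < 2 ^ (j : ℤ) * |s - k * 2 ^ (-(j : ℤ))| := mul_lt_mul_of_pos_left hsB h2j
    _ = |(2 : ℝ) ^ (j : ℤ) * s - k| := by
        rw [← abs_of_pos h2j, ← abs_mul, abs_of_pos h2j, mul_sub, zpow_neg, mul_left_comm,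
          mul_inv_cancel₀ h2j.ne', mul_one]

theorem tsum_over_D3_bound_general (a : ℝ) (ha1 : 1 / 2 < a)
    (L : ℝ) (hL : 1 < L) :
    ∃ c : ℝ, 0 < c ∧ ∀ (t : ℝ), 0 ≤ t → ∀ s ∈ Set.Icc (0 : ℝ) t, ∀ j : ℕ,
      (∑' k : setD3 a j t,
          Real.sqrt (Real.log (3 + (j : ℝ) + |((k : ℤ) : ℝ)|)) /
            (3 + |(2 : ℝ) ^ (j : ℤ) * s - ((k : ℤ) : ℝ)|) ^ L)
        ≤ c * (1 + (j : ℝ)) * (2 : ℝ) ^ (-(j : ℝ) * (L - 1) * (1 - a)) *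
            Real.sqrt (Real.log (3 + t)) := by
  set C := 6 / (L - 1) + 8 / (L - 1) ^ 2
  have hC : 0 < C := by have := sub_pos.2 hL; positivity
  refine ⟨C, hC, fun t ht s hs j => ?_⟩
  set c : ℝ := 2 ^ ((j : ℝ) * (1 - a))
  have hcj : c ≤ 2 ^ j := by
    rw [← rpow_natCast]
    exact rpow_le_rpow_of_exponent_le one_le_two (by nlinarith [j.cast_nonneg (α := ℝ)])
  have hx0 : 0 ≤ (2 : ℝ) ^ (j : ℤ) * s := mul_nonneg (by positivity) hs.1
  have hxt : (2 : ℝ) ^ (j : ℤ) * s ≤ 2 ^ j * t := by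
    rw [zpow_natCast]; exact mul_le_mul_of_nonneg_left hs.2 (by positivity)
  rw [show (2 : ℝ) ^ (-(j : ℝ) * (L - 1) * (1 - a)) = c ^ (1 - L) by
    rw [← rpow_mul two_pos.le]; ring_nf]
  refine tsum_le_of_sum_le' (by positivity) fun F => ?_
  exact (sum_map F (Function.Embedding.subtype _) _).symm.trans_le
    (sum_sqrt_log_div_rpow_le hL ht hx0 hxt (by positivity) hcj _ fun k hk => by
      obtain ⟨i, -, rfl⟩ := mem_map.1 hk
      exact (lt_abs_sub_of_mem_setD3 i.2 hs).le)

theorem tsum_over_D3_bound (a : ℝ) (ha1 : 1 / 2 < a) (ha2 : a < 1)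
    (L : ℝ) (hL : 1 < L) :
    ∃ c : ℝ, 0 < c ∧ ∀ (t : ℝ), 0 ≤ t → ∀ s ∈ Set.Icc (0 : ℝ) t, ∀ j : ℕ,
      (∑' k : setD3 a j t,
          Real.sqrt (Real.log (3 + (j : ℝ) + |((k : ℤ) : ℝ)|)) /
            (3 + |(2 : ℝ) ^ (j : ℤ) * s - ((k : ℤ) : ℝ)|) ^ L)
        ≤ c * (1 + (j : ℝ)) * (2 : ℝ) ^ (-(j : ℝ) * (L - 1) * (1 - a)) *
            Real.sqrt (Real.log (3 + t)) :=
  tsum_over_D3_bound_general a ha1 L hL
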